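/- Fix N ≥ 1, u > 0, ν_0 ≥ 0. For 𝒜^{ν_0}_{Ỹ} f(k) = k((N-k)/(N-k+1)) u ν_0 [f(k-1)-f(k)] + (k/(N-k+1)) u ν_0 [f(N)-f(k)] acting on f:{0,…,N}→ℝ, and 𝒜^{ν_0}_{L} g(n) = u ν_0 ∑_{j=1}^{n-1}[g(j)-g(n)] acting on g:{1,…,N}→ℝ, and for the duality function H(k,n) = k^{\underline{n}}/N^{\underline{n}}, one has 𝒜^{ν_0}_{Ỹ} H(·,n)(k) = 𝒜^{ν_0}_{L} H(k,·)(n) for all k ∈ {0,…,N} and n ∈ {1,…,N}. -/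

import Mathlib

/-!
Two facts about `H(k, n) = k^{\underline n} / N^{\underline n}` give the identity. The death part
is diagonal: `k (H(k-1, n) - H(k, n)) = -n H(k, n)`. The jump to `N` contributes `H(N, n) = 1`,
and the sum on the `L` side telescopes, since `(N - j) H(k, j+1) = (k - j) H(k, j)` yields
`(N - k + 1) ∑_{j=1}^{n-1} H(k, j) = k - (N - n + 1) H(k, n)`.
-/

/-- The hypergeometric duality function `H(k,n) = k^{\underline n}/N^{\underline n}`. -/
noncomputable def Hdual (N k n : ℕ) : ℝ :=
  (Nat.descFactorial k n : ℝ) / (Nat.descFactorial N n)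

theorem Nat.cast_descFactorial_succ {R : Type*} [Ring R] (k n : ℕ) :
    (k.descFactorial (n + 1) : R) = k.descFactorial n * ((k : R) - n) := by
  rw [← descPochhammer_eval_eq_descFactorial, ← descPochhammer_eval_eq_descFactorial,
    descPochhammer_succ_eval]

theorem Hdual_self {N n : ℕ} (h : n ≤ N) : Hdual N N n = 1 :=
  div_self (Nat.cast_ne_zero.2 (Nat.descFactorial_pos.2 h).ne')

theorem sub_mul_Hdual_succ {N j : ℕ} (k : ℕ) (h : j < N) :
    ((N : ℝ) - j) * Hdual N k (j + 1) = ((k : ℝ) - j) * Hdual N k j := by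
  have hN : (N : ℝ) - j ≠ 0 := sub_ne_zero.2 (Nat.cast_lt.2 h).ne'
  simp only [Hdual, Nat.cast_descFactorial_succ]
  field_simp

theorem mul_sub_Hdual_pred (N k n : ℕ) :
    (k : ℝ) * (Hdual N (k - 1) n - Hdual N k n) = -(n : ℝ) * Hdual N k n := by
  rcases k with _ | m
  · rcases n with _ | n <;> simp [Hdual]
  · have hm : ((m + 1 : ℕ) : ℝ) * m.descFactorial n
        = ((m : ℝ) + 1 - n) * (m + 1).descFactorial n := by
      rw [← Nat.cast_mul, ← Nat.succ_descFactorial_succ, Nat.cast_descFactorial_succ]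
      push_cast
      ring
    simp only [Hdual, Nat.add_sub_cancel, mul_sub, ← mul_div_assoc, hm]
    push_cast
    ring

theorem sub_add_one_mul_sum_Hdual (N k : ℕ) {n : ℕ} (hn : 1 ≤ n) (hnN : n ≤ N) :
    ((N : ℝ) - k + 1) * ∑ j ∈ Finset.Ico 1 n, Hdual N k j
      = k - ((N : ℝ) - n + 1) * Hdual N k n := by
  induction n, hn using Nat.le_induction with
  | base =>
    have hN : (N : ℝ) ≠ 0 := Nat.cast_ne_zero.2 (by omega)
    simp [Hdual, mul_div_cancel₀ _ hN]
  | succ n hn ih =>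
    rw [Finset.sum_Ico_succ_top hn, mul_add, ih (by omega)]
    push_cast
    linear_combination sub_mul_Hdual_succ k (show n < N by omega)

theorem beneficial_mutation_generator_identity_general (N : ℕ)
    (u ν₀ : ℝ)
    (k n : ℕ) (hk : k ≤ N) (hn1 : 1 ≤ n) (hnN : n ≤ N) :
    (k : ℝ) * (((N : ℝ) - k) / ((N : ℝ) - k + 1)) * u * ν₀
        * (Hdual N (k - 1) n - Hdual N k n)
      + ((k : ℝ) / ((N : ℝ) - k + 1)) * u * ν₀ * (Hdual N N n - Hdual N k n)
    = u * ν₀ * ∑ j ∈ Finset.Icc 1 (n - 1), (Hdual N k j - Hdual N k n) := by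
  have hc : (N : ℝ) - k + 1 ≠ 0 := by
    have : (k : ℝ) ≤ N := Nat.cast_le.2 hk
    linarith
  have hIcc : Finset.Icc 1 (n - 1) = Finset.Ico 1 n :=
    Finset.Icc_sub_one_right_eq_Ico_of_not_isMin (by simpa using Nat.one_le_iff_ne_zero.1 hn1) 1
  have hsum := sub_add_one_mul_sum_Hdual N k hn1 hnN
  have hpred := mul_sub_Hdual_pred N k n
  rw [hIcc, Finset.sum_sub_distrib, Finset.sum_const, Nat.card_Ico, nsmul_eq_mul,
    Nat.cast_sub hn1, Hdual_self hnN]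
  field_simp
  linear_combination (N - k) * u * ν₀ * hpred - u * ν₀ * hsum

/-- Beneficial-mutation part of the generator identity in the factorial moment duality
between `Ỹ` and the line-counting process `L` of the pruned lookdown ASG:
`𝒜^{ν₀}_{Ỹ} H(·,n)(k) = 𝒜^{ν₀}_{L} H(k,·)(n)`. -/
theorem beneficial_mutation_generator_identity (N : ℕ) (hN : 1 ≤ N)
    (u ν₀ : ℝ) (hu : 0 < u) (hν₀ : 0 ≤ ν₀)
    (k n : ℕ) (hk : k ≤ N) (hn1 : 1 ≤ n) (hnN : n ≤ N) :
    (k : ℝ) * (((N : ℝ) - k) / ((N : ℝ) - k + 1)) * u * ν₀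
        * (Hdual N (k - 1) n - Hdual N k n)
      + ((k : ℝ) / ((N : ℝ) - k + 1)) * u * ν₀ * (Hdual N N n - Hdual N k n)
    = u * ν₀ * ∑ j ∈ Finset.Icc 1 (n - 1), (Hdual N k j - Hdual N k n) :=
  beneficial_mutation_generator_identity_general N u ν₀ k n hk hn1 hnN
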